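/- arXiv:1409.8536 — 5 statements merged into one kernel-verified Lean document; each statement's English description precedes it below -/
import Mathlib

section
/- Let λ > 0 and let f : ℝ → ℝ be continuously differentiable (C¹) with f(0) = 0, f nondecreasing on [0, ∞), 0 ≤ f(t) ≤ 1 for all t ≥ 0, and deriv f 0 ≥ λ. Then for every ε > 0 there exists a function g : ℝ → ℝ that is continuous piecewise linear on [0, ∞) with finitely many segments such that |f(t) − g(t)| ≤ ε · f(t) for all t ≥ 0. -/
/-- `g` is continuous piecewise linear on `[0, ∞)` with finitely many segments:
there are breakpoints `0 = τ₀ < τ₁ < ⋯ < τ_N` and coefficients `a_k, b_k` such that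
`g t = a_k * t + b_k` on `[τ_k, τ_{k+1}]` for `k < N`, `g t = a_N * t + b_N` on
`[τ_N, ∞)`, and `g` is continuous on `[0, ∞)`. -/
def ContPiecewiseLinearOnIci (g : ℝ → ℝ) : Prop :=
  ∃ (N : ℕ) (τ a b : Fin (N + 1) → ℝ),
    τ 0 = 0 ∧ StrictMono τ ∧
    (∀ k : Fin N, ∀ t ∈ Set.Icc (τ k.castSucc) (τ k.succ),
      g t = a k.castSucc * t + b k.castSucc) ∧
    (∀ t ∈ Set.Ici (τ (Fin.last N)), g t = a (Fin.last N) * t + b (Fin.last N)) ∧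
    ContinuousOn g (Set.Ici (0 : ℝ))

/-!
Near `0`, `f t = c t + o(t)` with `c = f' 0 > 0`, so for small `δ` the chord `t ↦ slope f 0 δ * t`
approximates `f` on `[0, δ]` with relative error `ε`. Beyond `δ` we have `f t ≥ f δ > 0`, so the
absolute error `ε * f δ` suffices there: `f` is bounded and monotone, hence within that error of
`f T` on `[T, ∞)` for some `T`, and by uniform continuity on `[0, T]` the linear interpolant of `f`
on a fine enough grid of `[δ, T]` is within it on `[δ, T]`.
-/

open Set Filter Topology

/-- The piecewise linear interpolant of `f` at the nodes `x 0, …, x N`, written as a sum of clamped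
ramps; it is constant outside `[x 0, x N]`. -/
noncomputable def linearInterpolation (f : ℝ → ℝ) (N : ℕ) (x : ℕ → ℝ) (t : ℝ) : ℝ :=
  f (x 0) + ∑ k ∈ Finset.range N,
    slope f (x k) (x (k + 1)) * (max (x k) (min t (x (k + 1))) - x k)

section LinearInterpolation

variable {f : ℝ → ℝ} {x : ℕ → ℝ} {a b t : ℝ}

theorem continuous_linearInterpolation (f : ℝ → ℝ) (N : ℕ) (x : ℕ → ℝ) :
    Continuous (linearInterpolation f N x) := by
  unfold linearInterpolation
  fun_prop

theorem slope_mul_sub {k : Type*} [Field k] (f : k → k) (a b : k) :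
    slope f a b * (b - a) = f b - f a := by
  rw [mul_comm, ← smul_eq_mul, sub_smul_slope, vsub_eq_sub]

theorem slope_mul_clamp_sub_of_le (hab : a ≤ b) (hbt : b ≤ t) :
    slope f a b * (max a (min t b) - a) = f b - f a := by
  rw [min_eq_right hbt, max_eq_right hab, slope_mul_sub]

theorem clamp_sub_of_le (hta : t ≤ a) (hab : a ≤ b) : max a (min t b) - a = 0 := by
  rw [min_eq_left (hta.trans hab), max_eq_left hta, sub_self]

theorem linearInterpolation_of_le {N : ℕ} (hx : Monotone x) (ht : x N ≤ t) :
    linearInterpolation f N x t = f (x N) := by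
  have hterm : ∀ k ∈ Finset.range N,
      slope f (x k) (x (k + 1)) * (max (x k) (min t (x (k + 1))) - x k)
        = f (x (k + 1)) - f (x k) := fun k hk =>
    slope_mul_clamp_sub_of_le (hx k.le_succ) ((hx (Finset.mem_range.1 hk)).trans ht)
  rw [linearInterpolation, Finset.sum_congr rfl hterm, Finset.sum_range_sub (fun k => f (x k))]
  ring

theorem linearInterpolation_of_mem_Icc {N j : ℕ} (hx : Monotone x) (hj : j < N)
    (ht : t ∈ Icc (x j) (x (j + 1))) :
    linearInterpolation f N x t = f (x j) + slope f (x j) (x (j + 1)) * (t - x j) := by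
  obtain ⟨r, rfl⟩ := Nat.exists_eq_add_of_le hj
  have hbefore : linearInterpolation f j x t = f (x j) := linearInterpolation_of_le hx ht.1
  have hafter : ∀ i ∈ Finset.range r, slope f (x (j + 1 + i)) (x (j + 1 + i + 1)) *
      (max (x (j + 1 + i)) (min t (x (j + 1 + i + 1))) - x (j + 1 + i)) = 0 := fun i _ => by
    rw [clamp_sub_of_le (ht.2.trans (hx (by omega))) (hx (by omega)), mul_zero]
  rw [linearInterpolation, Finset.sum_range_add _ (j + 1) r, Finset.sum_range_succ,
    Finset.sum_eq_zero hafter, min_eq_left ht.2, max_eq_right ht.1, ← add_assoc, ← add_assoc,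
    ← linearInterpolation, hbefore, add_zero]

theorem abs_sub_linearInterpolation_le {N j : ℕ} (hx : Monotone x) (hj : j < N)
    (hf : MonotoneOn f (Icc (x j) (x (j + 1)))) (ht : t ∈ Icc (x j) (x (j + 1))) :
    |f t - linearInterpolation f N x t| ≤ f (x (j + 1)) - f (x j) := by
  have hxj : x j ∈ Icc (x j) (x (j + 1)) := left_mem_Icc.2 (ht.1.trans ht.2)
  have hxj1 : x (j + 1) ∈ Icc (x j) (x (j + 1)) := right_mem_Icc.2 (ht.1.trans ht.2)
  have hslope : 0 ≤ slope f (x j) (x (j + 1)) := hf.slope_nonneg hxj hxj1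
  have hrise : slope f (x j) (x (j + 1)) * (t - x j) ≤ f (x (j + 1)) - f (x j) := by
    calc slope f (x j) (x (j + 1)) * (t - x j)
        ≤ slope f (x j) (x (j + 1)) * (x (j + 1) - x j) := by gcongr; exact ht.2
      _ = f (x (j + 1)) - f (x j) := slope_mul_sub f _ _
  have hft_lo := hf hxj ht ht.1
  have hft_hi := hf ht hxj1 ht.2
  rw [linearInterpolation_of_mem_Icc hx hj ht, abs_sub_le_iff]
  constructor <;> linarith [mul_nonneg hslope (sub_nonneg.2 ht.1)]

theorem contPiecewiseLinearOnIci_linearInterpolation (f : ℝ → ℝ) (N : ℕ) (hx : StrictMono x)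
    (hx0 : x 0 = 0) : ContPiecewiseLinearOnIci (linearInterpolation f N x) := by
  refine ⟨N, fun k => x k,
    Fin.snoc (α := fun _ => ℝ) (fun k : Fin N => slope f (x k) (x (k + 1))) 0,
    Fin.snoc (α := fun _ => ℝ) (fun k : Fin N => f (x k) - slope f (x k) (x (k + 1)) * x k)
      (f (x N)), by simpa using hx0, hx.comp Fin.val_strictMono, fun k t ht => ?_,
    fun t ht => ?_, (continuous_linearInterpolation f N x).continuousOn⟩
  · simp only [Fin.val_castSucc, Fin.val_succ, Fin.snoc_castSucc] at ht ⊢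
    rw [linearInterpolation_of_mem_Icc hx.monotone k.isLt ht]
    ring
  · simp only [Fin.val_last, Fin.snoc_last, mem_Ici] at ht ⊢
    rw [linearInterpolation_of_le hx.monotone ht]
    ring

end LinearInterpolation

theorem exists_lt_mem_Ico_of_le_of_lt {α : Type*} [LinearOrder α] {x : ℕ → α} {t : α}
    (h0 : x 0 ≤ t) : ∀ {n : ℕ}, t < x n → ∃ j < n, t ∈ Ico (x j) (x (j + 1))
  | 0, hn => absurd h0 hn.not_ge
  | n + 1, hn => by
    by_cases htn : t < x n
    · obtain ⟨j, hj, hmem⟩ := exists_lt_mem_Ico_of_le_of_lt h0 htn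
      exact ⟨j, hj.trans n.lt_succ_self, hmem⟩
    · exact ⟨n, n.lt_succ_self, not_lt.1 htn, hn⟩

theorem MonotoneOn.exists_forall_ge_le_add {f : ℝ → ℝ} {a η : ℝ} (hf : MonotoneOn f (Ici a))
    (hbdd : BddAbove (f '' Ici a)) (hη : 0 < η) : ∃ T > a, ∀ t ≥ T, f t ≤ f T + η := by
  obtain ⟨_, ⟨T₀, hT₀, rfl⟩, hlt⟩ :=
    exists_lt_of_lt_csSup ((nonempty_Ici).image f) (sub_lt_self (sSup (f '' Ici a)) hη)
  have hT : a < max T₀ a + 1 := (le_max_right _ _).trans_lt (lt_add_one _)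
  refine ⟨max T₀ a + 1, hT, fun t ht => ?_⟩
  have hle : f t ≤ sSup (f '' Ici a) := le_csSup hbdd ⟨t, hT.le.trans ht, rfl⟩
  have hge : f T₀ ≤ f (max T₀ a + 1) :=
    hf hT₀ hT.le ((le_max_left _ _).trans (lt_add_one _).le)
  linarith

theorem HasDerivAt.exists_abs_sub_slope_mul_le {f : ℝ → ℝ} {c ε : ℝ} (hf : HasDerivAt f c 0)
    (hf0 : f 0 = 0) (hc : 0 < c) (hε : 0 < ε) :
    ∃ δ > 0, 0 < f δ ∧ ∀ t ∈ Icc 0 δ, |f t - slope f 0 δ * t| ≤ ε * f t := by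
  -- `q` is chosen so that `2 * q = ε * (c - q)`.
  set q := ε * c / (2 + ε)
  have hq : 0 < q := by positivity
  have hqc : q * (2 + ε) = ε * c := div_mul_cancel₀ _ (by positivity)
  have hnear : ∀ᶠ t in 𝓝[≥] 0, |f t - c * t| ≤ q * t := by
    filter_upwards [(hasDerivAt_iff_isLittleO.1 hf).def hq |>.filter_mono nhdsWithin_le_nhds,
      self_mem_nhdsWithin] with t ht (ht0 : 0 ≤ t)
    simpa [hf0, mul_comm, abs_of_nonneg ht0] using ht
  obtain ⟨δ, hδ, hsub⟩ := mem_nhdsGE_iff_exists_Icc_subset.1 hnear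
  have hlin : ∀ t ∈ Icc 0 δ, |f t - c * t| ≤ q * t := fun t ht => hsub ht
  have hlow : ∀ t ∈ Icc 0 δ, (c - q) * t ≤ f t := fun t ht => by
    linarith [(abs_le.1 (hlin t ht)).1]
  have hslope : |slope f 0 δ - c| ≤ q := by
    have h := hlin δ (right_mem_Icc.2 hδ.le)
    rwa [slope_def_field, hf0, sub_zero, sub_zero, div_sub' hδ.ne', abs_div, abs_of_pos hδ,
      div_le_iff₀ hδ, mul_comm δ c]
  refine ⟨δ, hδ, lt_of_lt_of_le (by nlinarith) (hlow δ (right_mem_Icc.2 hδ.le)), fun t ht => ?_⟩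
  calc |f t - slope f 0 δ * t|
      = |(f t - c * t) - (slope f 0 δ - c) * t| := by ring_nf
    _ ≤ |f t - c * t| + |(slope f 0 δ - c) * t| := abs_sub _ _
    _ = |f t - c * t| + |slope f 0 δ - c| * t := by rw [abs_mul, abs_of_nonneg ht.1]
    _ ≤ q * t + q * t := by gcongr; exacts [hlin t ht, ht.1]
    _ ≤ ε * ((c - q) * t) := by nlinarith [ht.1]
    _ ≤ ε * f t := by gcongr; exact hlow t ht

noncomputable def gridFrom (δ h : ℝ) : ℕ → ℝ
  | 0 => 0
  | k + 1 => δ + k * h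

theorem strictMono_gridFrom {δ h : ℝ} (hδ : 0 < δ) (hh : 0 < h) : StrictMono (gridFrom δ h) :=
  strictMono_nat_of_lt_succ fun
    | 0 => by simpa [gridFrom] using hδ
    | k + 1 => by simp only [gridFrom, Nat.cast_add, Nat.cast_one]; linarith

theorem exists_abs_sub_linearInterpolation_gridFrom_le {f : ℝ → ℝ} (hcont : Continuous f)
    (hmono : MonotoneOn f (Ici 0)) (hbdd : BddAbove (f '' Ici 0)) {δ η : ℝ} (hδ : 0 < δ)
    (hη : 0 < η) :
    ∃ h > 0, ∃ N > 0, ∀ t ≥ δ, |f t - linearInterpolation f N (gridFrom δ h) t| ≤ η := by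
  have hsub : Ici δ ⊆ Ici 0 := Ici_subset_Ici.2 hδ.le
  obtain ⟨T, hTδ, hT⟩ :=
    (hmono.mono hsub).exists_forall_ge_le_add (hbdd.mono (image_mono hsub)) hη
  obtain ⟨r, hr, hunif⟩ := Metric.uniformContinuousOn_iff.1
    ((isCompact_Icc (a := 0) (b := T)).uniformContinuousOn_of_continuous hcont.continuousOn) η hη
  obtain ⟨m, hm⟩ := exists_nat_gt ((T - δ) / r)
  have hm0 : (0 : ℝ) < m := (div_pos (sub_pos.2 hTδ) hr).trans hm
  set h := (T - δ) / m
  have hh : 0 < h := div_pos (sub_pos.2 hTδ) hm0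
  have hhr : h < r := by rwa [div_lt_iff₀ hm0, mul_comm, ← div_lt_iff₀ hr]
  set x := gridFrom δ h
  have hx : StrictMono x := strictMono_gridFrom hδ hh
  have hxT : x (m + 1) = T := by simp only [x, gridFrom, h]; field_simp; ring
  have hx_mem : ∀ k ≤ m + 1, x k ∈ Icc 0 T := fun k hk =>
    ⟨hx.monotone (Nat.zero_le k), hxT ▸ hx.monotone hk⟩
  refine ⟨h, hh, m + 1, m.succ_pos, fun t ht => ?_⟩
  rcases le_or_gt T t with hTt | htT
  · rw [linearInterpolation_of_le hx.monotone (hxT ▸ hTt), hxT,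
      abs_of_nonneg (sub_nonneg.2 (hmono (hsub hTδ.le) (hsub (hTδ.le.trans hTt)) hTt))]
    linarith [hT t hTt]
  · obtain ⟨j, hj, hmem⟩ := exists_lt_mem_Ico_of_le_of_lt (x := fun k => x (k + 1))
      (by simpa [x, gridFrom] using ht) (n := m) (hxT ▸ htT)
    have hstep : dist (x (j + 1 + 1)) (x (j + 1)) < r := by
      simp only [x, gridFrom, Real.dist_eq]; push_cast
      rwa [show δ + (j + 1) * h - (δ + j * h) = h by ring, abs_of_pos hh]
    calc |f t - linearInterpolation f (m + 1) x t|
        ≤ f (x (j + 1 + 1)) - f (x (j + 1)) :=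
          abs_sub_linearInterpolation_le hx.monotone (by omega)
            (hmono.mono (Icc_subset_Ici_self.trans (Ici_subset_Ici.2 (hx_mem _ (by omega)).1)))
            (Ico_subset_Icc_self hmem)
      _ ≤ dist (f (x (j + 1 + 1))) (f (x (j + 1))) := le_abs_self _
      _ ≤ η := (hunif _ (hx_mem _ (by omega)) _ (hx_mem _ (by omega)) hstep).le

theorem piecewise_linear_relative_approximation
    (lam : ℝ) (hlam : 0 < lam) (f : ℝ → ℝ)
    (hC1 : ContDiff ℝ 1 f) (hf0 : f 0 = 0)
    (hmono : MonotoneOn f (Set.Ici (0 : ℝ)))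
    (hbdd : ∀ t : ℝ, 0 ≤ t → 0 ≤ f t ∧ f t ≤ 1)
    (hderiv : lam ≤ deriv f 0) :
    ∀ ε : ℝ, 0 < ε → ∃ g : ℝ → ℝ, ContPiecewiseLinearOnIci g ∧
      ∀ t : ℝ, 0 ≤ t → |f t - g t| ≤ ε * f t := by
  intro ε hε
  have hf' : HasDerivAt f (deriv f 0) 0 := (hC1.differentiable one_ne_zero 0).hasDerivAt
  obtain ⟨δ, hδ, hfδ, hchord⟩ := hf'.exists_abs_sub_slope_mul_le hf0 (hlam.trans_le hderiv) hε
  have hbdd_above : BddAbove (f '' Ici 0) := ⟨1, by rintro _ ⟨t, ht, rfl⟩; exact (hbdd t ht).2⟩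
  obtain ⟨h, hh, N, hN, happrox⟩ := exists_abs_sub_linearInterpolation_gridFrom_le
    hC1.continuous hmono hbdd_above hδ (mul_pos hε hfδ)
  have hx := strictMono_gridFrom hδ hh
  refine ⟨linearInterpolation f N (gridFrom δ h),
    contPiecewiseLinearOnIci_linearInterpolation f N hx rfl, fun t ht => ?_⟩
  rcases le_total t δ with htδ | hδt
  · rw [linearInterpolation_of_mem_Icc hx.monotone hN (j := 0)
      (by simpa [gridFrom] using ⟨ht, htδ⟩)]
    simpa [gridFrom, hf0] using hchord t ⟨ht, htδ⟩
  · calc |f t - linearInterpolation f N (gridFrom δ h) t| ≤ ε * f δ := happrox t hδt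
      _ ≤ ε * f t := by gcongr; exact hmono hδ.le (hδ.le.trans hδt) hδt
end

section
/- Let n ≥ 2 and 1 ≤ ℓ ≤ n, let r : Fin n, and let s : Fin ℓ → Fin n be an injective sequence of vertices with s 0 = r (a single closed tour visiting the distinct vertices s 0, s 1, …, s (ℓ−1) in order and returning to r). Define x : Fin n → Fin n → Bool by x i j = true if and only if there exists k : Fin ℓ with s k = i and s (k + 1) = j, where the index k + 1 is taken modulo ℓ. Then there exists u : Fin n → ℤ such that 2 ≤ u i ≤ n for every i : Fin n, and for all i, j with i ≠ r, j ≠ r, and i ≠ j, u i − u j + 1 ≤ (n − 1)·(1 − (if x i j then 1 else 0)). -/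
theorem mtz_feasibility_single_tour
    (n ℓ : ℕ) (hn : 2 ≤ n) (hℓ1 : 1 ≤ ℓ) (hℓn : ℓ ≤ n)
    (r : Fin n) (s : Fin ℓ → Fin n) (hinj : Function.Injective s)
    (hs0 : s ⟨0, by omega⟩ = r)
    (x : Fin n → Fin n → Bool)
    (hx : ∀ i j : Fin n, x i j = true ↔
      ∃ k : Fin ℓ, s k = i ∧ s ⟨(k.val + 1) % ℓ, Nat.mod_lt _ (by omega)⟩ = j) :
    ∃ u : Fin n → ℤ, (∀ i : Fin n, 2 ≤ u i ∧ u i ≤ (n : ℤ)) ∧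
      ∀ i j : Fin n, i ≠ r → j ≠ r → i ≠ j →
        u i - u j + 1 ≤ ((n : ℤ) - 1) * (1 - (if x i j then 1 else 0)) := by
  classical
  set u : Fin n → ℤ := fun i =>
    if h : ∃ k : Fin ℓ, s k = i ∧ k.val ≠ 0 then (h.choose.val + 1 : ℤ) else 2 with hu
  have hval : ∀ (k : Fin ℓ), k.val ≠ 0 → u (s k) = (k.val + 1 : ℤ) := by
    intro k hk
    have h : ∃ k' : Fin ℓ, s k' = s k ∧ k'.val ≠ 0 := ⟨k, rfl, hk⟩
    simp only [hu, dif_pos h]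
    have := hinj h.choose_spec.1
    rw [this]
  have hbnd : ∀ i, 2 ≤ u i ∧ u i ≤ (n : ℤ) := by
    intro i
    simp only [hu]
    split
    · rename_i h
      have h1 : 1 ≤ h.choose.val := Nat.one_le_iff_ne_zero.mpr h.choose_spec.2
      have h2 : h.choose.val < ℓ := h.choose.isLt
      constructor <;> omega
    · exact ⟨le_refl 2, by exact_mod_cast hn⟩
  refine ⟨u, hbnd, ?_⟩
  intro i j hi hj hij
  by_cases hxij : x i j = true
  · rw [if_pos hxij]
    obtain ⟨k, hki, hkj⟩ := (hx i j).mp hxij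
    have hk0 : k.val ≠ 0 := by
      intro h0
      apply hi
      rw [← hki, ← hs0]
      congr 1
      exact Fin.ext h0
    have hmod : (k.val + 1) % ℓ ≠ 0 := by
      intro h0
      apply hj
      rw [← hkj, ← hs0]
      congr 1
      exact Fin.ext h0
    have hk1 : k.val + 1 < ℓ := by
      have hkl : k.val + 1 ≤ ℓ := k.isLt
      rcases eq_or_lt_of_le hkl with he | hlt
      · exact absurd (by rw [he, Nat.mod_self]) hmod
      · exact hlt
    have hmodval : (k.val + 1) % ℓ = k.val + 1 := Nat.mod_eq_of_lt hk1
    have hui : u i = (k.val + 1 : ℤ) := by rw [← hki]; exact hval k hk0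
    have huj : u j = (k.val + 2 : ℤ) := by
      rw [← hkj]
      have := hval ⟨(k.val + 1) % ℓ, Nat.mod_lt _ (by omega)⟩ (by simp [hmodval])
      rw [this]; simp [hmodval]; ring
    rw [hui, huj]; push_cast; linarith
  · rw [if_neg hxij]
    have h1 := (hbnd i).2
    have h2 := (hbnd j).1
    have : (1 : ℤ) - 0 = 1 := by ring
    nlinarith
end

section
/- Let f : ℝ → ℝ be defined by f(t) = 1 − exp(−t). There exist real numbers 0 < τ₁ < τ₂ < τ₃ and coefficients a₀, b₀, a₁, b₁, a₂, b₂, a₃, b₃ ∈ ℝ such that the function g : ℝ → ℝ given by g(t) = a₀·t + b₀ on [0, τ₁], g(t) = a₁·t + b₁ on [τ₁, τ₂], g(t) = a₂·t + b₂ on [τ₂, τ₃], and g(t) = a₃·t + b₃ on [τ₃, ∞) is continuous on [0, ∞) and satisfies |g(t) − f(t)| ≤ 0.05 · f(t) for all t ≥ 0. -/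
open Real Set

-- generic: turn a lower bound on exp x into an upper bound on exp (-x)
lemma exp_neg_le_of_le {x u S : ℝ} (hu : 0 < u) (hS : S ≤ Real.exp x)
    (h : 1 ≤ u * S) : Real.exp (-x) ≤ u := by
  have hex := Real.exp_pos x
  have h2 : (Real.exp x)⁻¹ * Real.exp x = 1 := inv_mul_cancel₀ (ne_of_gt hex)
  rw [Real.exp_neg]
  have hinv : 0 < (Real.exp x)⁻¹ := inv_pos.mpr hex
  nlinarith [mul_le_mul_of_nonneg_left hS hu.le]

-- generic: turn an upper bound on exp x into a lower bound on exp (-x)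
lemma le_exp_neg_of_le {x r S : ℝ} (hr : 0 ≤ r) (hS : Real.exp x ≤ S)
    (h : r * S ≤ 1) : r ≤ Real.exp (-x) := by
  have hex := Real.exp_pos x
  have h2 : (Real.exp x)⁻¹ * Real.exp x = 1 := inv_mul_cancel₀ (ne_of_gt hex)
  rw [Real.exp_neg]
  have hinv : 0 < (Real.exp x)⁻¹ := inv_pos.mpr hex
  nlinarith [mul_le_mul_of_nonneg_left hS hr]

lemma hu1 : Real.exp (-(9/50 : ℝ)) ≤ 8353/10000 := by
  have h := Real.sum_le_exp_of_nonneg (show (0:ℝ) ≤ 9/50 by norm_num) 6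
  norm_num [Finset.sum_range_succ, Nat.factorial] at h
  exact exp_neg_le_of_le (by norm_num) h (by norm_num)

lemma hu2 : Real.exp (-(81/100 : ℝ)) ≤ 4449/10000 := by
  have h := Real.sum_le_exp_of_nonneg (show (0:ℝ) ≤ 81/100 by norm_num) 8
  norm_num [Finset.sum_range_succ, Nat.factorial] at h
  exact exp_neg_le_of_le (by norm_num) h (by norm_num)

lemma hu3 : Real.exp (-(12/5 : ℝ)) ≤ 908/10000 := by
  have h := Real.sum_le_exp_of_nonneg (show (0:ℝ) ≤ 12/5 by norm_num) 12
  norm_num [Finset.sum_range_succ, Nat.factorial] at h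
  exact exp_neg_le_of_le (by norm_num) h (by norm_num)

lemma hr1 : (6838/10000 : ℝ) ≤ Real.exp (-(19/50 : ℝ)) := by
  have h := Real.exp_bound' (show (0:ℝ) ≤ 19/50 by norm_num)
    (show (19/50:ℝ) ≤ 1 by norm_num) (show 0 < 6 by norm_num)
  norm_num [Finset.sum_range_succ, Nat.factorial] at h
  exact le_exp_neg_of_le (by norm_num) h (by norm_num)

lemma hr2 : (2441/10000 : ℝ) ≤ Real.exp (-(141/100 : ℝ)) := by
  have h := Real.exp_bound' (show (0:ℝ) ≤ 141/200 by norm_num)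
    (show (141/200:ℝ) ≤ 1 by norm_num) (show 0 < 8 by norm_num)
  norm_num [Finset.sum_range_succ, Nat.factorial] at h
  have h0 : (0:ℝ) ≤ Real.exp (141/200) := (Real.exp_pos _).le
  have hsq : Real.exp (141/100 : ℝ) = Real.exp (141/200) * Real.exp (141/200) := by
    rw [← Real.exp_add]; norm_num
  have hS : Real.exp (141/100 : ℝ) ≤
      (185688748541680282009121 / 91750400000000000000000 : ℝ) *
      (185688748541680282009121 / 91750400000000000000000 : ℝ) := by
    rw [hsq]
    exact mul_le_mul h h h0 (le_trans h0 h)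
  exact le_exp_neg_of_le (by norm_num) hS (by norm_num)

-- chord upper bound via convexity of exp
lemma exp_chord {p q A B : ℝ} (hpq : p < q) (hp : Real.exp (-p) ≤ A - B*p)
    (hq : Real.exp (-q) ≤ A - B*q) {t : ℝ} (htp : p ≤ t) (htq : t ≤ q) :
    Real.exp (-t) ≤ A - B*t := by
  have hqp : (0:ℝ) < q - p := by linarith
  set θ : ℝ := (q - t)/(q - p) with hθdef
  have hθ0 : 0 ≤ θ := div_nonneg (by linarith) hqp.le
  have hθ1 : 0 ≤ 1 - θ := by
    have : θ ≤ 1 := by rw [hθdef, div_le_one hqp]; linarith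
    linarith
  have key := convexOn_exp.2 (Set.mem_univ (-p)) (Set.mem_univ (-q)) hθ0 hθ1
    (by ring : θ + (1 - θ) = 1)
  simp only [smul_eq_mul] at key
  have harg : θ * (-p) + (1 - θ) * (-q) = -t := by
    rw [hθdef]; field_simp; ring
  rw [harg] at key
  have ht' : θ * p + (1 - θ) * q = t := by rw [hθdef]; field_simp; ring
  calc Real.exp (-t) ≤ θ * Real.exp (-p) + (1 - θ) * Real.exp (-q) := key
    _ ≤ θ * (A - B*p) + (1 - θ) * (A - B*q) :=
        add_le_add (mul_le_mul_of_nonneg_left hp hθ0) (mul_le_mul_of_nonneg_left hq hθ1)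
    _ = A - B*t := by linear_combination (-B) * ht'

-- tangent-style lower bound
lemma exp_tangent {c r : ℝ} (hr : 0 ≤ r) (hrc : r ≤ Real.exp (-c)) (t : ℝ) :
    r * (1 + c - t) ≤ Real.exp (-t) := by
  rcases le_or_gt (1 + c - t) 0 with h | h
  · exact le_trans (mul_nonpos_of_nonneg_of_nonpos hr h) (Real.exp_pos _).le
  · have h1 : 1 + (c - t) ≤ Real.exp (c - t) := by linarith [Real.add_one_le_exp (c - t)]
    have h2 : Real.exp (-t) = Real.exp (-c) * Real.exp (c - t) := by
      rw [← Real.exp_add]; ring_nf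
    rw [h2]
    calc r * (1 + c - t) ≤ Real.exp (-c) * (1 + (c - t)) := by
          apply mul_le_mul hrc (le_of_eq (by ring)) (by linarith) (Real.exp_pos _).le
      _ ≤ Real.exp (-c) * Real.exp (c - t) :=
          mul_le_mul_of_nonneg_left h1 (Real.exp_pos _).le

theorem exp_curve_four_segment_approximation :
    ∃ τ₁ τ₂ τ₃ : ℝ, 0 < τ₁ ∧ τ₁ < τ₂ ∧ τ₂ < τ₃ ∧
      ∃ a₀ b₀ a₁ b₁ a₂ b₂ a₃ b₃ : ℝ, ∃ g : ℝ → ℝ,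
        (∀ t ∈ Set.Icc (0 : ℝ) τ₁, g t = a₀ * t + b₀) ∧
        (∀ t ∈ Set.Icc τ₁ τ₂, g t = a₁ * t + b₁) ∧
        (∀ t ∈ Set.Icc τ₂ τ₃, g t = a₂ * t + b₂) ∧
        (∀ t ∈ Set.Ici τ₃, g t = a₃ * t + b₃) ∧
        ContinuousOn g (Set.Ici (0 : ℝ)) ∧
        ∀ t : ℝ, 0 ≤ t →
          |g t - (1 - Real.exp (-t))| ≤ 0.05 * (1 - Real.exp (-t)) := by
  have piece0 : ∀ t : ℝ, 0 ≤ t → t ≤ 9/50 →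
      min (min ((19/20)*t) ((409/630)*t + 379/7000))
          (min ((37/159)*t + 83/212) ((19:ℝ)/20)) = 19/20*t := by
    intro t h0 h1
    have hAB : (19:ℝ)/20*t ≤ (409:ℝ)/630*t + 379/7000 := by linarith
    have hAC : (19:ℝ)/20*t ≤ (37:ℝ)/159*t + 83/212 := by linarith
    have hAD : (19:ℝ)/20*t ≤ 19/20 := by linarith
    rw [min_eq_left hAB, min_eq_left (le_min hAC hAD)]
  have piece1 : ∀ t : ℝ, 9/50 ≤ t → t ≤ 81/100 →
      min (min ((19/20)*t) ((409/630)*t + 379/7000))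
          (min ((37/159)*t + 83/212) ((19:ℝ)/20)) = (409/630)*t + 379/7000 := by
    intro t h0 h1
    have hBA : (409:ℝ)/630*t + 379/7000 ≤ (19:ℝ)/20*t := by linarith
    have hBC : (409:ℝ)/630*t + 379/7000 ≤ (37:ℝ)/159*t + 83/212 := by linarith
    have hBD : (409:ℝ)/630*t + 379/7000 ≤ (19:ℝ)/20 := by linarith
    rw [min_eq_right hBA, min_eq_left (le_min hBC hBD)]
  have piece2 : ∀ t : ℝ, 81/100 ≤ t → t ≤ 12/5 →
      min (min ((19/20)*t) ((409/630)*t + 379/7000))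
          (min ((37/159)*t + 83/212) ((19:ℝ)/20)) = (37/159)*t + 83/212 := by
    intro t h0 h1
    have hCD : (37:ℝ)/159*t + 83/212 ≤ (19:ℝ)/20 := by linarith
    have hCA : (37:ℝ)/159*t + 83/212 ≤ (19:ℝ)/20*t := by linarith
    have hCB : (37:ℝ)/159*t + 83/212 ≤ (409:ℝ)/630*t + 379/7000 := by linarith
    rw [min_eq_left hCD, min_eq_right (le_min hCA hCB)]
  have piece3 : ∀ t : ℝ, 12/5 ≤ t →
      min (min ((19/20)*t) ((409/630)*t + 379/7000))
          (min ((37/159)*t + 83/212) ((19:ℝ)/20)) = 19/20 := by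
    intro t h0
    have hDC : (19:ℝ)/20 ≤ (37:ℝ)/159*t + 83/212 := by linarith
    have hDA : (19:ℝ)/20 ≤ (19:ℝ)/20*t := by linarith
    have hDB : (19:ℝ)/20 ≤ (409:ℝ)/630*t + 379/7000 := by linarith
    rw [min_eq_right hDC, min_eq_right (le_min hDA hDB)]
  refine ⟨9/50, 81/100, 12/5, by norm_num, by norm_num, by norm_num,
    19/20, 0, 409/630, 379/7000, 37/159, 83/212, 0, 19/20,
    fun t => min (min ((19/20)*t) ((409/630)*t + 379/7000))
                 (min ((37/159)*t + 83/212) (19/20)), ?_, ?_, ?_, ?_, ?_, ?_⟩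
  · rintro t ⟨ht0, ht1⟩
    dsimp only
    rw [piece0 t ht0 ht1]; ring
  · rintro t ⟨ht0, ht1⟩
    dsimp only
    rw [piece1 t ht0 ht1]
  · rintro t ⟨ht0, ht1⟩
    dsimp only
    rw [piece2 t ht0 ht1]
  · rintro t ht
    simp only [Set.mem_Ici] at ht
    dsimp only
    rw [piece3 t ht]; ring
  · -- continuity
    exact (Continuous.min
      ((continuous_const.mul continuous_id).min
        ((continuous_const.mul continuous_id).add continuous_const))
      (((continuous_const.mul continuous_id).add continuous_const).min
        continuous_const)).continuousOn
  · -- error bound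
    intro t ht
    dsimp only
    have hfpos : 0 ≤ 1 - Real.exp (-t) := by
      have : Real.exp (-t) ≤ 1 := Real.exp_le_one_iff.mpr (by linarith)
      linarith
    have hexp_pos := Real.exp_pos (-t)
    have hft : 1 - Real.exp (-t) ≤ t := by linarith [Real.add_one_le_exp (-t)]
    have hlow : 19/20 * (1 - Real.exp (-t)) ≤
        min (min ((19/20)*t) ((409/630)*t + 379/7000))
            (min ((37/159)*t + 83/212) ((19:ℝ)/20)) := by
      rcases le_or_gt t (9/50) with h1 | h1
      · rw [piece0 t ht h1]; linarith
      · rcases le_or_gt t (81/100) with h2 | h2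
        · rw [piece1 t h1.le h2]
          have htan := exp_tangent (show (0:ℝ) ≤ 6838/10000 by norm_num) hr1 t
          linarith
        · rcases le_or_gt t (12/5) with h3 | h3
          · rw [piece2 t h2.le h3]
            have htan := exp_tangent (show (0:ℝ) ≤ 2441/10000 by norm_num) hr2 t
            linarith
          · rw [piece3 t h3.le]; linarith
    have hupp : min (min ((19/20)*t) ((409/630)*t + 379/7000))
            (min ((37/159)*t + 83/212) ((19:ℝ)/20)) ≤
        21/20 * (1 - Real.exp (-t)) := by
      rcases le_or_gt t (9/50) with h1 | h1
      · rw [piece0 t ht h1]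
        have hc : Real.exp (-t) ≤ 1 - (183/200)*t :=
          exp_chord (show (0:ℝ) < 9/50 by norm_num) (by norm_num)
            (by nlinarith [hu1]) ht h1
        linarith
      · rcases le_or_gt t (81/100) with h2 | h2
        · rw [piece1 t h1.le h2]
          have hc : Real.exp (-t) ≤ 66279/70000 - (976/1575)*t :=
            exp_chord (show (9:ℝ)/50 < 81/100 by norm_num)
              (by nlinarith [hu1]) (by nlinarith [hu2]) h1.le h2
          linarith
        · rcases le_or_gt t (12/5) with h3 | h3
          · rw [piece2 t h2.le h3]
            have hc : Real.exp (-t) ≤ 82851/132500 - (3541/15900)*t :=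
              exp_chord (show (81:ℝ)/100 < 12/5 by norm_num)
                (by nlinarith [hu2]) (by nlinarith [hu3]) h2.le h3
            linarith
          · rw [piece3 t h3.le]
            have hmono : Real.exp (-t) ≤ Real.exp (-(12/5)) :=
              Real.exp_le_exp.mpr (by linarith)
            linarith [hu3]
    rw [abs_le]
    have h005 : (0.05 : ℝ) = 1/20 := by norm_num
    constructor <;> rw [h005] <;> linarith
end

section
/- Let n ∈ ℕ and let f : Fin n → ℝ → ℝ be such that each f i is continuous on [0, ∞) and satisfies 0 ≤ f i t ≤ 1 for all t ≥ 0. Define the nondecreasing envelope g : Fin n → ℝ → ℝ by g i t = sSup (f i '' (Set.Icc 0 t)) for t ≥ 0. Then for every T ≥ 0, sSup { ∑_{i} f i (t i) : t : Fin n → ℝ, (∀ i, 0 ≤ t i), ∑_{i} t i ≤ T } = sSup { ∑_{i} g i (t i) : t : Fin n → ℝ, (∀ i, 0 ≤ t i), ∑_{i} t i ≤ T }. -/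
theorem nondecreasing_envelope_preserves_optimal_reward
    (n : ℕ) (f : Fin n → ℝ → ℝ)
    (hcont : ∀ i : Fin n, ContinuousOn (f i) (Set.Ici (0 : ℝ)))
    (hbdd : ∀ i : Fin n, ∀ t : ℝ, 0 ≤ t → 0 ≤ f i t ∧ f i t ≤ 1)
    (g : Fin n → ℝ → ℝ)
    (hg : ∀ i : Fin n, ∀ t : ℝ, 0 ≤ t → g i t = sSup (f i '' Set.Icc 0 t))
    (T : ℝ) (hT : 0 ≤ T) :
    sSup {x : ℝ | ∃ t : Fin n → ℝ, (∀ i, 0 ≤ t i) ∧ (∑ i, t i) ≤ T ∧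
        x = ∑ i, f i (t i)} =
      sSup {x : ℝ | ∃ t : Fin n → ℝ, (∀ i, 0 ≤ t i) ∧ (∑ i, t i) ≤ T ∧
        x = ∑ i, g i (t i)} := by
  set A := {x : ℝ | ∃ t : Fin n → ℝ, (∀ i, 0 ≤ t i) ∧ (∑ i, t i) ≤ T ∧
        x = ∑ i, f i (t i)} with hA
  set B := {x : ℝ | ∃ t : Fin n → ℝ, (∀ i, 0 ≤ t i) ∧ (∑ i, t i) ≤ T ∧
        x = ∑ i, g i (t i)} with hB
  -- image sups are attained and bounded
  have himg : ∀ i : Fin n, ∀ t : ℝ, 0 ≤ t →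
      ∃ s ∈ Set.Icc (0:ℝ) t, sSup (f i '' Set.Icc 0 t) = f i s := by
    intro i t ht
    exact (isCompact_Icc).exists_sSup_image_eq ⟨0, le_refl 0, ht⟩
      ((hcont i).mono (fun x hx => hx.1))
  have hgle : ∀ i : Fin n, ∀ t : ℝ, 0 ≤ t → g i t ≤ 1 := by
    intro i t ht
    rw [hg i t ht]
    refine csSup_le ⟨f i 0, ⟨0, ⟨le_refl 0, ht⟩, rfl⟩⟩ ?_
    rintro x ⟨s, hs, rfl⟩
    exact (hbdd i s hs.1).2
  have hfg : ∀ i : Fin n, ∀ t : ℝ, 0 ≤ t → f i t ≤ g i t := by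
    intro i t ht
    rw [hg i t ht]
    refine le_csSup ⟨1, ?_⟩ ⟨t, ⟨ht, le_refl t⟩, rfl⟩
    rintro x ⟨s, hs, rfl⟩
    exact (hbdd i s hs.1).2
  -- B ⊆ A
  have hBA : B ⊆ A := by
    rintro y ⟨t, ht0, htT, rfl⟩
    choose s hs hgs using fun i => himg i (t i) (ht0 i)
    refine ⟨s, fun i => (hs i).1, le_trans (Finset.sum_le_sum fun i _ => (hs i).2) htT, ?_⟩
    exact Finset.sum_congr rfl fun i _ => by rw [hg i (t i) (ht0 i), hgs i]
  have hAne : A.Nonempty := ⟨∑ i, f i 0, fun _ => 0, fun i => le_refl 0, by simpa, rfl⟩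
  have hBne : B.Nonempty := ⟨∑ i, g i 0, fun _ => 0, fun i => le_refl 0, by simpa, rfl⟩
  have hAbdd : BddAbove A := by
    refine ⟨(n : ℝ), ?_⟩
    rintro x ⟨t, ht0, htT, rfl⟩
    calc ∑ i, f i (t i) ≤ ∑ _i : Fin n, (1:ℝ) :=
          Finset.sum_le_sum fun i _ => (hbdd i (t i) (ht0 i)).2
      _ = n := by simp
  refine le_antisymm ?_ (csSup_le_csSup hAbdd hBne hBA)
  apply csSup_le hAne
  rintro x ⟨t, ht0, htT, rfl⟩
  have hmem : (∑ i, g i (t i)) ∈ B := ⟨t, ht0, htT, rfl⟩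
  have hBbdd : BddAbove B := by
    refine ⟨(n : ℝ), ?_⟩
    rintro x ⟨t, ht0, htT, rfl⟩
    calc ∑ i, g i (t i) ≤ ∑ _i : Fin n, (1:ℝ) :=
          Finset.sum_le_sum fun i _ => hgle i (t i) (ht0 i)
      _ = n := by simp
  exact le_trans (Finset.sum_le_sum fun i _ => hfg i (t i) (ht0 i)) (le_csSup hBbdd hmem)
end

section
/- Let λ > 0, let 0 < ε < 1, and let f : ℝ → ℝ be continuously differentiable (C¹) with f(0) = 0, f nondecreasing on [0, ∞), 0 ≤ f(t) ≤ 1 for all t ≥ 0, and deriv f 0 ≥ λ. Then there exists a function g : ℝ → ℝ that is continuous piecewise linear on [0, ∞) with finitely many segments such that for all t ≥ 0, f(t) ≤ g(t) and g(t) ≤ f(t)/(1 − ε). -/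
/-!
Near `0`, `f t / t → f' 0 > 0`, so for `s = (1 + ε) f' 0` the line `s t` lies between `f t` and
`f t / (1 - ε)` on some `[0, r]`, with `f r < s r`. Being monotone, continuous and bounded, `f` is
uniformly continuous on `[0, ∞)`, and beyond `r` it is at least `f r > 0`; so on a fine grid
`x₁ = r, x₂ = r + h, …` it grows by at most the factor `1 / (1 - ε)` over two steps. Interpolate
`s r` at `x₁` and `f xⱼ / (1 - ε)` at `xⱼ₊₁`, and stop at a grid point where `f` is within the
factor `1 - ε` of its supremum: on every segment both endpoint values lie in
`[f t, f t / (1 - ε)]`, hence so does the interpolant.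
-/

open Set

noncomputable def pwlInterp (p q : ℕ → ℝ) : ℕ → ℝ → ℝ
  | 0, _ => q 0
  | n + 1, t => pwlInterp p q n t +
      (q (n + 1) - q n) / (p (n + 1) - p n) * (max (p n) (min t (p (n + 1))) - p n)

section pwlInterp

variable {p : ℕ → ℝ} (q : ℕ → ℝ)

theorem continuous_pwlInterp (n : ℕ) : Continuous (pwlInterp p q n) := by
  induction n with
  | zero => exact continuous_const
  | succ n ih => simp only [pwlInterp]; fun_prop

theorem pwlInterp_of_le (hp : StrictMono p) {n : ℕ} {t : ℝ} (ht : p n ≤ t) :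
    pwlInterp p q n t = q n := by
  induction n with
  | zero => rfl
  | succ n ih =>
    have hlt : p n < p (n + 1) := hp n.lt_succ_self
    rw [pwlInterp, ih (hlt.le.trans ht), min_eq_right ht, max_eq_right hlt.le]
    field_simp [sub_ne_zero.2 hlt.ne']
    ring

theorem pwlInterp_eq_pwlInterp_of_le (hp : Monotone p) {k n : ℕ} (hkn : k ≤ n) {t : ℝ}
    (ht : t ≤ p k) : pwlInterp p q n t = pwlInterp p q k t := by
  induction n, hkn using Nat.le_induction with
  | base => rfl
  | succ n hkn ih =>
    have htn : t ≤ p n := ht.trans (hp hkn)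
    rw [pwlInterp, ih, min_eq_left (htn.trans (hp n.le_succ)), max_eq_left htn]
    ring

theorem pwlInterp_succ_of_mem_Icc (hp : StrictMono p) {k : ℕ} {t : ℝ}
    (ht : t ∈ Icc (p k) (p (k + 1))) :
    pwlInterp p q (k + 1) t = q k + (q (k + 1) - q k) / (p (k + 1) - p k) * (t - p k) := by
  rw [pwlInterp, pwlInterp_of_le q hp ht.1, min_eq_left ht.2, max_eq_right ht.1]

theorem pwlInterp_succ_mem_uIcc (hp : StrictMono p) {k : ℕ} {t : ℝ}
    (ht : t ∈ Icc (p k) (p (k + 1))) :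
    pwlInterp p q (k + 1) t ∈ uIcc (q k) (q (k + 1)) := by
  have hlt : 0 < p (k + 1) - p k := sub_pos.2 (hp k.lt_succ_self)
  set θ := (t - p k) / (p (k + 1) - p k)
  have hθ : θ ∈ Icc (0 : ℝ) 1 :=
    ⟨div_nonneg (sub_nonneg.2 ht.1) hlt.le, (div_le_one hlt).2 (by linarith [ht.2])⟩
  have : pwlInterp p q (k + 1) t = AffineMap.lineMap (q k) (q (k + 1)) θ := by
    rw [pwlInterp_succ_of_mem_Icc q hp ht, AffineMap.lineMap_apply_ring']
    ring
  rw [this, ← segment_eq_uIcc]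
  exact lineMap_mem_segment ℝ _ _ hθ

theorem contPiecewiseLinearOnIci_pwlInterp (hp : StrictMono p) (hp0 : p 0 = 0) (N : ℕ) :
    ContPiecewiseLinearOnIci (pwlInterp p q N) := by
  let σ : ℕ → ℝ := fun k => (q (k + 1) - q k) / (p (k + 1) - p k)
  refine ⟨N, fun j => p j, Fin.snoc (fun k : Fin N => σ k) 0,
    Fin.snoc (fun k : Fin N => q k - σ k * p k) (q N), hp0, hp.comp Fin.val_strictMono,
    fun k t ht => ?_, fun t ht => ?_, (continuous_pwlInterp q N).continuousOn⟩
  · simp only [Fin.snoc_castSucc, Fin.val_castSucc, Fin.val_succ] at ht ⊢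
    rw [pwlInterp_eq_pwlInterp_of_le q hp.monotone k.isLt ht.2, pwlInterp_succ_of_mem_Icc q hp ht]
    ring
  · simp only [Fin.snoc_last, Fin.val_last] at ht ⊢
    rw [pwlInterp_of_le q hp ht]
    ring

end pwlInterp

theorem exists_lt_mem_Ico_succ {α : Type*} [LinearOrder α] (p : ℕ → α) {N : ℕ} {t : α}
    (ht : t ∈ Ico (p 0) (p N)) : ∃ k < N, t ∈ Ico (p k) (p (k + 1)) := by
  induction N with
  | zero => exact absurd (ht.1.trans_lt ht.2) (lt_irrefl _)
  | succ N ih =>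
    by_cases hN : t < p N
    · obtain ⟨k, hk, hkt⟩ := ih ⟨ht.1, hN⟩
      exact ⟨k, hk.trans N.lt_succ_self, hkt⟩
    · exact ⟨N, N.lt_succ_self, not_lt.1 hN, ht.2⟩

theorem exists_contPiecewiseLinearOnIci_forall_mem {p : ℕ → ℝ} (q : ℕ → ℝ) (S : ℝ → Set ℝ)
    (hp : StrictMono p) (hp0 : p 0 = 0) (N : ℕ)
    (hseg : ∀ k ≤ N, ∀ t ∈ Icc (p k) (p (k + 1)), pwlInterp p q (k + 1) t ∈ S t)
    (htail : ∀ t, p (N + 1) ≤ t → q (N + 1) ∈ S t) :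
    ∃ g, ContPiecewiseLinearOnIci g ∧ ∀ t, 0 ≤ t → g t ∈ S t := by
  refine ⟨pwlInterp p q (N + 1), contPiecewiseLinearOnIci_pwlInterp q hp hp0 _, fun t ht => ?_⟩
  rcases lt_or_ge t (p (N + 1)) with hlt | hle
  · obtain ⟨k, hk, hkt⟩ := exists_lt_mem_Ico_succ p ⟨hp0 ▸ ht, hlt⟩
    rw [pwlInterp_eq_pwlInterp_of_le q hp.monotone hk hkt.2.le]
    exact hseg k (Nat.lt_succ_iff.1 hk) t (Ico_subset_Icc_self hkt)
  · rw [pwlInterp_of_le q hp hle]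
    exact htail t hle

open Filter Topology in
theorem HasDerivAt.exists_forall_mul_lt_lt_mul {f : ℝ → ℝ} {d a b : ℝ} (hf : HasDerivAt f d 0)
    (hf0 : f 0 = 0) (ha : a < d) (hb : d < b) :
    ∃ r > 0, ∀ t ∈ Ioc 0 r, a * t < f t ∧ f t < b * t := by
  have hslope : Tendsto (slope f 0) (𝓝[>] 0) (𝓝 d) :=
    (hasDerivAt_iff_tendsto_slope.1 hf).mono_left (nhdsWithin_mono _ fun t ht => ne_of_gt ht)
  obtain ⟨r, hr, hsub⟩ := mem_nhdsGT_iff_exists_Ioc_subset.1 (hslope (Ioo_mem_nhds ha hb))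
  refine ⟨r, hr, fun t ht => ?_⟩
  have hmem : f t / t ∈ Ioo a b := by simpa [slope_def_field, hf0] using hsub ht
  exact ⟨(lt_div_iff₀ ht.1).1 hmem.1, (div_lt_iff₀ ht.1).1 hmem.2⟩

theorem MonotoneOn.uniformContinuousOn_Ici {f : ℝ → ℝ} {a : ℝ} (hmono : MonotoneOn f (Ici a))
    (hcont : ContinuousOn f (Ici a)) (hbdd : BddAbove (f '' Ici a)) :
    UniformContinuousOn f (Ici a) := by
  rw [Metric.uniformContinuousOn_iff]
  intro η hη
  obtain ⟨_, ⟨T, hT, rfl⟩, hTη⟩ :=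
    exists_lt_of_lt_csSup (nonempty_Ici.image f) (sub_lt_self (sSup (f '' Ici a)) hη)
  obtain ⟨δ, hδ, hδc⟩ := Metric.uniformContinuousOn_iff.1
    (isCompact_Icc.uniformContinuousOn_of_continuous (hcont.mono Icc_subset_Ici_self)) η hη
  -- on `[T, ∞)` the oscillation of `f` is below `sSup - f T < η`; below `T`, use `[a, T + 1]`
  have key : ∀ x ∈ Ici a, ∀ y ∈ Ici a, y - x < min δ 1 → f y - f x < η := by
    intro x hx y hy hxy
    rcases le_or_gt y x with hyx | hxy'
    · linarith [hmono hy hx hyx]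
    rcases le_or_gt x T with hxT | hTx
    · have hy' : y ∈ Icc a (T + 1) := ⟨hy, by linarith [min_le_right δ 1]⟩
      have := hδc y hy' x ⟨hx, by linarith⟩
        (by rw [Real.dist_eq, abs_of_pos (sub_pos.2 hxy')]; linarith [min_le_left δ 1])
      linarith [le_abs_self (f y - f x), Real.dist_eq (f y) (f x)]
    · linarith [le_csSup hbdd (mem_image_of_mem f hy), hmono hT hx hTx.le]
  refine ⟨min δ 1, lt_min hδ one_pos, fun x hx y hy hxy => ?_⟩
  rw [Real.dist_eq, abs_sub_lt_iff] at hxy ⊢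
  exact ⟨key y hy x hx hxy.1, key x hx y hy hxy.2⟩

theorem exists_forall_le_div_of_bddAbove {f : ℝ → ℝ} {s : Set ℝ} {c : ℝ}
    (hbdd : BddAbove (f '' s)) (hpos : ∃ x ∈ s, 0 < f x) (hc0 : 0 < c) (hc1 : c < 1) :
    ∃ T ∈ s, ∀ t ∈ s, f t ≤ f T / c := by
  obtain ⟨x, hx, hfx⟩ := hpos
  have hL : 0 < sSup (f '' s) := hfx.trans_le (le_csSup hbdd (mem_image_of_mem f hx))
  obtain ⟨_, ⟨T, hT, rfl⟩, hlt⟩ :=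
    exists_lt_of_lt_csSup ⟨f x, mem_image_of_mem f hx⟩ (by nlinarith : c * sSup (f '' s) < _)
  refine ⟨T, hT, fun t ht => (le_div_iff₀ hc0).2 ?_⟩
  nlinarith [le_csSup hbdd (mem_image_of_mem f ht)]

theorem exists_step_le_div_one_sub {f : ℝ → ℝ} {ε r m : ℝ} (hmono : MonotoneOn f (Ici 0))
    (huc : UniformContinuousOn f (Ici 0)) (hε0 : 0 < ε) (hε1 : ε < 1) (hr : 0 ≤ r)
    (hfr : 0 < f r) (hm : f r < m) :
    ∃ h > 0, f (r + h) ≤ m ∧ ∀ x t, r ≤ x → x ≤ t → t ≤ x + 2 * h → f t ≤ f x / (1 - ε) := by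
  set η := min (m - f r) (ε * f r)
  obtain ⟨δ, hδ, hδc⟩ :=
    Metric.uniformContinuousOn_iff.1 huc η (lt_min (sub_pos.2 hm) (mul_pos hε0 hfr))
  have hstep : ∀ x t, r ≤ x → x ≤ t → t ≤ x + 2 * (δ / 3) → f t < f x + η := by
    intro x t hx hxt ht
    have := hδc t (hr.trans (hx.trans hxt)) x (hr.trans hx)
      (by rw [Real.dist_eq, abs_of_nonneg (sub_nonneg.2 hxt)]; linarith)
    linarith [le_abs_self (f t - f x), Real.dist_eq (f t) (f x)]
  refine ⟨δ / 3, by positivity, ?_, fun x t hx hxt ht => ?_⟩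
  · linarith [hstep r (r + δ / 3) le_rfl (by linarith) (by linarith),
      min_le_left (m - f r) (ε * f r)]
  · have hfx : f r ≤ f x := hmono hr (hr.trans hx) hx
    have hft : f t < (1 + ε) * f x := by
      nlinarith [hstep x t hx hxt ht, min_le_right (m - f r) (ε * f r)]
    rw [le_div_iff₀ (sub_pos.2 hε1)]
    nlinarith [mul_pos hε0 hε0]

def breakpoints (r h : ℝ) : ℕ → ℝ
  | 0 => 0
  | j + 1 => r + j * h

theorem breakpoints_succ_succ (r h : ℝ) (j : ℕ) :
    breakpoints r h (j + 2) = breakpoints r h (j + 1) + h := by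
  simp only [breakpoints]
  push_cast
  ring

theorem breakpoints_strictMono {r h : ℝ} (hr : 0 < r) (hh : 0 < h) :
    StrictMono (breakpoints r h) := by
  refine strictMono_nat_of_lt_succ fun j => ?_
  cases j with
  | zero => simpa [breakpoints] using hr
  | succ j => rw [breakpoints_succ_succ]; linarith

noncomputable def overApproxValues (f : ℝ → ℝ) (ε s r h : ℝ) : ℕ → ℝ
  | 0 => 0
  | 1 => s * r
  | j + 2 => f (breakpoints r h (j + 1)) / (1 - ε)

section overApprox

variable {f : ℝ → ℝ} {ε s r h : ℝ}

theorem overApproxValues_mem_Icc (hmono : MonotoneOn f (Ici 0)) (hε1 : ε < 1) (hr : 0 < r)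
    (hh : 0 < h) (hfr : (1 - ε) * s * r ≤ f r) (hmargin : f (r + h) ≤ s * r)
    (hmesh : ∀ x t, r ≤ x → x ≤ t → t ≤ x + 2 * h → f t ≤ f x / (1 - ε)) {j : ℕ} {t : ℝ}
    (ht : t ∈ Icc (breakpoints r h (j + 1)) (breakpoints r h (j + 2))) :
    overApproxValues f ε s r h (j + 1) ∈ Icc (f t) (f t / (1 - ε)) ∧
      overApproxValues f ε s r h (j + 2) ∈ Icc (f t) (f t / (1 - ε)) := by
  have hc : 0 < 1 - ε := sub_pos.2 hε1
  have hpr : ∀ i, r ≤ breakpoints r h (i + 1) := fun i =>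
    le_add_of_nonneg_right (by positivity)
  have ht0 : 0 ≤ t := hr.le.trans ((hpr j).trans ht.1)
  have hwindow : ∀ x, r ≤ x → x ≤ t → t ≤ x + 2 * h → f x / (1 - ε) ∈ Icc (f t) (f t / (1 - ε)) :=
    fun x hrx hxt htx => ⟨hmesh x t hrx hxt htx,
      div_le_div_of_nonneg_right (hmono (hr.le.trans hrx) ht0 hxt) hc.le⟩
  rw [breakpoints_succ_succ] at ht
  refine ⟨?_, hwindow _ (hpr j) ht.1 (by linarith [ht.2])⟩
  cases j with
  | zero =>
    obtain ⟨hrt, hth⟩ : r ≤ t ∧ t ≤ r + h := by simpa [breakpoints] using ht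
    show s * r ∈ Icc (f t) (f t / (1 - ε))
    refine ⟨(hmono ht0 (ht0.trans hth) hth).trans hmargin, ?_⟩
    rw [le_div_iff₀ hc]
    linarith [hmono hr.le ht0 hrt]
  | succ i =>
    exact hwindow _ (hpr i) (by linarith [ht.1, breakpoints_succ_succ r h i])
      (by linarith [ht.2, breakpoints_succ_succ r h i])

theorem pwlInterp_overApproxValues_mem_Icc (hmono : MonotoneOn f (Ici 0)) (hf0 : f 0 = 0)
    (hε1 : ε < 1) (hr : 0 < r) (hh : 0 < h)
    (hnear : ∀ t ∈ Ioc 0 r, (1 - ε) * s * t ≤ f t ∧ f t ≤ s * t)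
    (hmargin : f (r + h) ≤ s * r)
    (hmesh : ∀ x t, r ≤ x → x ≤ t → t ≤ x + 2 * h → f t ≤ f x / (1 - ε)) (k : ℕ) {t : ℝ}
    (ht : t ∈ Icc (breakpoints r h k) (breakpoints r h (k + 1))) :
    pwlInterp (breakpoints r h) (overApproxValues f ε s r h) (k + 1) t ∈
      Icc (f t) (f t / (1 - ε)) := by
  cases k with
  | zero =>
    have hseg : pwlInterp (breakpoints r h) (overApproxValues f ε s r h) 1 t = s * t := by
      rw [pwlInterp_succ_of_mem_Icc _ (breakpoints_strictMono hr hh) ht]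
      simp only [breakpoints, overApproxValues, CharP.cast_eq_zero, zero_mul, add_zero, sub_zero,
        zero_add]
      field_simp
    obtain ⟨ht0, htr⟩ : 0 ≤ t ∧ t ≤ r := by simpa [breakpoints] using ht
    rw [hseg]
    rcases ht0.eq_or_lt with rfl | htpos
    · simp [hf0]
    · obtain ⟨hlo, hhi⟩ := hnear t ⟨htpos, htr⟩
      exact ⟨hhi, (le_div_iff₀ (sub_pos.2 hε1)).2 (by linarith)⟩
  | succ j =>
    obtain ⟨hj1, hj2⟩ := overApproxValues_mem_Icc hmono hε1 hr hh (hnear r ⟨hr, le_rfl⟩).1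
      hmargin hmesh ht
    exact uIcc_subset_Icc hj1 hj2 (pwlInterp_succ_mem_uIcc _ (breakpoints_strictMono hr hh) ht)

end overApprox

theorem piecewise_linear_over_approximation
    (lam : ℝ) (hlam : 0 < lam) (ε : ℝ) (hε0 : 0 < ε) (hε1 : ε < 1)
    (f : ℝ → ℝ) (hC1 : ContDiff ℝ 1 f) (hf0 : f 0 = 0)
    (hmono : MonotoneOn f (Set.Ici (0 : ℝ)))
    (hbdd : ∀ t : ℝ, 0 ≤ t → 0 ≤ f t ∧ f t ≤ 1)
    (hderiv : lam ≤ deriv f 0) :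
    ∃ g : ℝ → ℝ, ContPiecewiseLinearOnIci g ∧
      ∀ t : ℝ, 0 ≤ t → f t ≤ g t ∧ g t ≤ f t / (1 - ε) := by
  have hc : 0 < 1 - ε := sub_pos.2 hε1
  have hd : 0 < deriv f 0 := hlam.trans_le hderiv
  set s := (1 + ε) * deriv f 0
  obtain ⟨r, hr, hnear⟩ :=
    ((hC1.differentiable one_ne_zero) 0).hasDerivAt.exists_forall_mul_lt_lt_mul hf0
      (a := (1 - ε) * s) (b := s) (by nlinarith [mul_pos (mul_pos hε0 hε0) hd]) (by nlinarith)
  have hfr : 0 < f r := (by positivity : 0 < (1 - ε) * s * r).trans (hnear r ⟨hr, le_rfl⟩).1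
  have hbdd' : BddAbove (f '' Ici 0) := ⟨1, by rintro _ ⟨t, ht, rfl⟩; exact (hbdd t ht).2⟩
  obtain ⟨T, hT0, hT⟩ := exists_forall_le_div_of_bddAbove hbdd' ⟨r, hr.le, hfr⟩ hc (by linarith)
  obtain ⟨h, hh, hmargin, hmesh⟩ := exists_step_le_div_one_sub hmono
    (hmono.uniformContinuousOn_Ici hC1.continuous.continuousOn hbdd') hε0 hε1 hr.le hfr
    (hnear r ⟨hr, le_rfl⟩).2
  obtain ⟨n, hn⟩ := exists_nat_ge ((T - r) / h)
  have hp := breakpoints_strictMono hr hh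
  refine exists_contPiecewiseLinearOnIci_forall_mem _ (fun t => Icc (f t) (f t / (1 - ε))) hp rfl
    (n + 1) (fun k _ t ht => pwlInterp_overApproxValues_mem_Icc hmono hf0 hε1 hr hh
      (fun t ht => (hnear t ht).imp le_of_lt le_of_lt) hmargin hmesh k ht) fun t ht => ?_
  have hTn : T ≤ breakpoints r h (n + 1) := by
    rw [div_le_iff₀ hh] at hn
    simp only [breakpoints]
    linarith
  have hnt : breakpoints r h (n + 1) ≤ t := (hp.monotone (n + 1).le_succ).trans ht
  have hn0 : 0 ≤ breakpoints r h (n + 1) := hT0.trans hTn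
  exact ⟨(hT t (hn0.trans hnt)).trans (div_le_div_of_nonneg_right (hmono hT0 hn0 hTn) hc.le),
    div_le_div_of_nonneg_right (hmono hn0 (hn0.trans hnt) hnt) hc.le⟩
end
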